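/- arXiv:2506.03562 — 2 statements merged into one kernel-verified Lean document; each statement's English description precedes it below -/
import Mathlib

section
/- Let n, d ≥ 1, let K be a Borel measure on ℝⁿ such that ∫ (|x| + 𝟙_{{0}}(x))² dK(x) ≤ 1, and let δ ≥ 0 satisfy ζ := δ·K(ℝⁿ) ≤ 1. Let Θ : ℝⁿ → ℝ be Borel measurable with |Θ(x)| ≤ |x| + 𝟙_{{0}}(x) for all x. For a Borel measurable U : ℝⁿ → ℝ^d with ∫ |U|² dK < ∞, set Û := δ·∫ U dK, Θ̂ := δ·∫ Θ dK, define Γ(U) := ∫ (U(x) − Û)·(Θ(x) − Θ̂) dK(x) + (1 − ζ)·δ·(∫ U dK)·(∫ Θ dK) ∈ ℝ^d, and ⦀U⦀² := ∫ |U(x) − Û|² dK(x) + (1 − ζ)·δ·|∫ U dK|². Then for all Borel measurable U¹, U² : ℝⁿ → ℝ^d with ∫|U¹|² dK < ∞ and ∫|U²|² dK < ∞, one has |Γ(U¹) − Γ(U²)|² ≤ 2·⦀U¹ − U²⦀². -/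
open MeasureTheory
open scoped ENNReal

section Helpers
variable {α : Type*} {m : MeasurableSpace α} {μ : Measure α}
variable {E : Type*} [NormedAddCommGroup E] [NormedSpace ℝ E]

omit [NormedSpace ℝ E] in
lemma memL2_of_lintegral {f : α → E} (hf : AEStronglyMeasurable f μ)
    (h : ∫⁻ x, ENNReal.ofReal (‖f x‖ ^ 2) ∂μ < ⊤) : MemLp f 2 μ := by
  rw [memLp_two_iff_integrable_sq_norm hf]
  refine ⟨(hf.norm.aemeasurable.pow_const 2).aestronglyMeasurable, ?_⟩
  rwa [hasFiniteIntegral_iff_ofReal (ae_of_all _ fun x => sq_nonneg _)]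

lemma cs_smul {f : α → ℝ} {g : α → E} (hf : MemLp f 2 μ) (hg : MemLp g 2 μ) :
    ‖∫ x, f x • g x ∂μ‖ ^ 2 ≤ (∫ x, f x ^ 2 ∂μ) * (∫ x, ‖g x‖ ^ 2 ∂μ) := by
  have hpq : Real.HolderConjugate 2 2 := Real.HolderConjugate.two_two
  have hf2 : MemLp f (ENNReal.ofReal 2) μ := by
    simpa [ENNReal.ofReal_ofNat] using hf
  have hg2 : MemLp (fun x => ‖g x‖) (ENNReal.ofReal 2) μ := by
    simpa [ENNReal.ofReal_ofNat] using hg.norm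
  have h2 := integral_mul_norm_le_Lp_mul_Lq hpq hf2 hg2
  simp only [norm_norm] at h2
  have e1 : ∫ a, ‖f a‖ ^ (2:ℝ) ∂μ = ∫ a, f a ^ 2 ∂μ := by
    refine integral_congr_ae (ae_of_all _ fun a => ?_)
    show ‖f a‖ ^ (2:ℝ) = f a ^ 2
    rw [show (2:ℝ) = ((2:ℕ):ℝ) by norm_num, Real.rpow_natCast]
    simp [Real.norm_eq_abs, sq_abs]
  have e2 : ∫ a, ‖g a‖ ^ (2:ℝ) ∂μ = ∫ a, ‖g a‖ ^ 2 ∂μ := by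
    refine integral_congr_ae (ae_of_all _ fun a => ?_)
    show ‖g a‖ ^ (2:ℝ) = ‖g a‖ ^ 2
    rw [show (2:ℝ) = ((2:ℕ):ℝ) by norm_num, Real.rpow_natCast]
  rw [e1, e2] at h2
  have h1 : ‖∫ x, f x • g x ∂μ‖ ≤ ∫ x, ‖f x‖ * ‖g x‖ ∂μ := by
    calc ‖∫ x, f x • g x ∂μ‖ ≤ ∫ x, ‖f x • g x‖ ∂μ := norm_integral_le_integral_norm _
    _ = ∫ x, ‖f x‖ * ‖g x‖ ∂μ := by simp [norm_smul]
  have h3 := h1.trans h2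
  have hA : 0 ≤ ∫ x, f x ^ 2 ∂μ := integral_nonneg fun x => sq_nonneg _
  have hB : 0 ≤ ∫ x, ‖g x‖ ^ 2 ∂μ := integral_nonneg fun x => sq_nonneg _
  calc ‖∫ x, f x • g x ∂μ‖ ^ 2
      ≤ ((∫ x, f x ^ 2 ∂μ) ^ (1/2:ℝ) * (∫ x, ‖g x‖ ^ 2 ∂μ) ^ (1/2:ℝ)) ^ 2 :=
        pow_le_pow_left₀ (norm_nonneg _) h3 2
    _ = (∫ x, f x ^ 2 ∂μ) * (∫ x, ‖g x‖ ^ 2 ∂μ) := by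
        rw [mul_pow, ← Real.rpow_natCast ((∫ x, f x ^ 2 ∂μ) ^ (1/2:ℝ)) 2,
          ← Real.rpow_natCast ((∫ x, ‖g x‖ ^ 2 ∂μ) ^ (1/2:ℝ)) 2,
          ← Real.rpow_mul hA, ← Real.rpow_mul hB]
        norm_num

lemma integrable_smul_L2 {f : α → ℝ} {g : α → E} (hf : MemLp f 2 μ) (hg : MemLp g 2 μ) :
    Integrable (fun x => f x • g x) μ := by
  have hpqr : (1:ℝ≥0∞) / 1 = 1/2 + 1/2 := by
    norm_num
    exact ENNReal.inv_two_add_inv_two.symm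
  exact memLp_one_iff_integrable.mp (hg.smul hf (r := 1))

omit [NormedSpace ℝ E] in
lemma int_sq_le_one {f : α → ℝ} (hm : AEStronglyMeasurable f μ)
    (h : ∫⁻ x, ENNReal.ofReal (f x ^ 2) ∂μ ≤ 1) : ∫ x, f x ^ 2 ∂μ ≤ 1 := by
  rw [integral_eq_lintegral_of_nonneg_ae (ae_of_all _ fun x => sq_nonneg (f x))
    ((hm.aemeasurable.pow_const 2).aestronglyMeasurable)]
  have := ENNReal.toReal_mono ENNReal.one_ne_top h
  simpa using this

end Helpers

noncomputable section

/-- The function `|I|(x) = |x| + 𝟙_{{0}}(x)`. -/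
def absI {n : ℕ} (x : EuclideanSpace ℝ (Fin n)) : ℝ :=
  ‖x‖ + Set.indicator ({0} : Set (EuclideanSpace ℝ (Fin n))) (fun _ => (1 : ℝ)) x

/-- The `Γ` function associated to the kernel `K`, jump `δ`, atom mass `ζ` and the
fixed function `Θ`, evaluated at an integrand `U`. -/
def Gamma {n d : ℕ} (K : Measure (EuclideanSpace ℝ (Fin n))) (δ ζ : ℝ)
    (Θ : EuclideanSpace ℝ (Fin n) → ℝ)
    (U : EuclideanSpace ℝ (Fin n) → EuclideanSpace ℝ (Fin d)) :
    EuclideanSpace ℝ (Fin d) :=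
  (∫ x, (Θ x - δ * ∫ y, Θ y ∂K) • (U x - δ • ∫ y, U y ∂K) ∂K)
    + ((1 - ζ) * δ * ∫ y, Θ y ∂K) • (∫ y, U y ∂K)

/-- The squared `⦀·⦀` norm associated to the kernel `K`, jump `δ` and atom mass `ζ`. -/
def tnormSq {n d : ℕ} (K : Measure (EuclideanSpace ℝ (Fin n))) (δ ζ : ℝ)
    (U : EuclideanSpace ℝ (Fin n) → EuclideanSpace ℝ (Fin d)) : ℝ :=
  (∫ x, ‖U x - δ • ∫ y, U y ∂K‖ ^ 2 ∂K) + (1 - ζ) * δ * ‖∫ y, U y ∂K‖ ^ 2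

set_option maxHeartbeats 2000000 in
/-- The `Γ` function is Lipschitz with constant `√2` with respect to the `⦀·⦀`-norm. -/
theorem gamma_lipschitz {n d : ℕ} (hn : 1 ≤ n) (hd : 1 ≤ d)
    (K : Measure (EuclideanSpace ℝ (Fin n)))
    (hK : ∫⁻ x, ENNReal.ofReal (absI x ^ 2) ∂K ≤ 1)
    (δ : ℝ) (hδ : 0 ≤ δ)
    (hζ : ENNReal.ofReal δ * K Set.univ ≤ 1)
    (Θ : EuclideanSpace ℝ (Fin n) → ℝ) (hΘmeas : Measurable Θ)
    (hΘ : ∀ x, |Θ x| ≤ absI x)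
    (U₁ U₂ : EuclideanSpace ℝ (Fin n) → EuclideanSpace ℝ (Fin d))
    (hU₁ : Measurable U₁) (hU₂ : Measurable U₂)
    (hU₁int : ∫⁻ x, ENNReal.ofReal (‖U₁ x‖ ^ 2) ∂K < ⊤)
    (hU₂int : ∫⁻ x, ENNReal.ofReal (‖U₂ x‖ ^ 2) ∂K < ⊤) :
    ‖Gamma K δ ((ENNReal.ofReal δ * K Set.univ).toReal) Θ U₁
        - Gamma K δ ((ENNReal.ofReal δ * K Set.univ).toReal) Θ U₂‖ ^ 2
      ≤ 2 * tnormSq K δ ((ENNReal.ofReal δ * K Set.univ).toReal)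
          (fun x => U₁ x - U₂ x) := by
  set ζ := (ENNReal.ofReal δ * K Set.univ).toReal with hζdef
  -- square-integrability of Θ
  have hΘsq_lint : ∫⁻ x, ENNReal.ofReal (Θ x ^ 2) ∂K ≤ 1 := by
    refine le_trans (lintegral_mono fun x => ENNReal.ofReal_le_ofReal ?_) hK
    have h1 := hΘ x
    have h2 : 0 ≤ |Θ x| := abs_nonneg _
    nlinarith [sq_abs (Θ x)]
  have hΘ2 : MemLp Θ 2 K := by
    refine memL2_of_lintegral hΘmeas.aestronglyMeasurable ?_
    refine lt_of_le_of_lt ?_ ENNReal.one_lt_top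
    calc ∫⁻ x, ENNReal.ofReal (‖Θ x‖ ^ 2) ∂K = ∫⁻ x, ENNReal.ofReal (Θ x ^ 2) ∂K := by
          refine lintegral_congr fun x => ?_
          rw [Real.norm_eq_abs, sq_abs]
      _ ≤ 1 := hΘsq_lint
  have hU₁2 : MemLp U₁ 2 K := memL2_of_lintegral hU₁.aestronglyMeasurable hU₁int
  have hU₂2 : MemLp U₂ 2 K := memL2_of_lintegral hU₂.aestronglyMeasurable hU₂int
  have hV2 : MemLp (fun x => U₁ x - U₂ x) 2 K := hU₁2.sub hU₂2
  have hT : ∫ x, Θ x ^ 2 ∂K ≤ 1 := int_sq_le_one hΘmeas.aestronglyMeasurable hΘsq_lint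
  have hTnn : 0 ≤ ∫ x, Θ x ^ 2 ∂K := integral_nonneg fun x => sq_nonneg _
  rcases eq_or_lt_of_le hδ with rfl | hδpos
  · -- case δ = 0
    simp only [Gamma, tnormSq, zero_mul, mul_zero, zero_smul, smul_zero, sub_zero, add_zero,
      zero_add]
    have hi₁ : Integrable (fun x => Θ x • U₁ x) K := integrable_smul_L2 hΘ2 hU₁2
    have hi₂ : Integrable (fun x => Θ x • U₂ x) K := integrable_smul_L2 hΘ2 hU₂2
    rw [← integral_sub hi₁ hi₂]
    have hEq : ∀ x, Θ x • U₁ x - Θ x • U₂ x = Θ x • (U₁ x - U₂ x) := fun x =>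
      (smul_sub _ _ _).symm
    simp only [hEq]
    have hcs := cs_smul hΘ2 hV2
    have hBnn : 0 ≤ ∫ x, ‖U₁ x - U₂ x‖ ^ 2 ∂K := integral_nonneg fun x => sq_nonneg _
    nlinarith [hcs, hT, hTnn, hBnn]
  · -- case δ > 0
    have hKfin : K Set.univ < ⊤ := by
      by_contra h
      push_neg at h
      rw [top_le_iff] at h
      rw [h, ENNReal.mul_top (by simpa [ENNReal.ofReal_eq_zero] using hδpos)] at hζ
      simp at hζ
    have hFin : IsFiniteMeasure K := ⟨hKfin⟩
    set M := (K Set.univ).toReal with hMdef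
    have hMnn : 0 ≤ M := ENNReal.toReal_nonneg
    have hζeq : ζ = δ * M := by
      rw [hζdef, ENNReal.toReal_mul, ENNReal.toReal_ofReal hδ]
    have hζ1 : ζ ≤ 1 := by
      have h := ENNReal.toReal_mono ENNReal.one_ne_top hζ
      rw [ENNReal.toReal_one] at h
      exact h
    have hζnn : 0 ≤ ζ := ENNReal.toReal_nonneg
    have hΘint : Integrable Θ K := hΘ2.integrable one_le_two
    have hU₁int' : Integrable U₁ K := hU₁2.integrable one_le_two
    have hU₂int' : Integrable U₂ K := hU₂2.integrable one_le_two
    have hmV : ∫ y, (U₁ y - U₂ y) ∂K = (∫ y, U₁ y ∂K) - ∫ y, U₂ y ∂K :=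
      integral_sub hU₁int' hU₂int'
    set mΘ := ∫ y, Θ y ∂K with hmΘdef
    set m₁ := ∫ y, U₁ y ∂K with hm₁def
    set m₂ := ∫ y, U₂ y ∂K with hm₂def
    have hθ2 : MemLp (fun x => Θ x - δ * mΘ) 2 K := hΘ2.sub (memLp_const _)
    have hW2 : MemLp (fun x => (U₁ x - U₂ x) - δ • (m₁ - m₂)) 2 K := hV2.sub (memLp_const _)
    have hG₁ : MemLp (fun x => U₁ x - δ • m₁) 2 K := hU₁2.sub (memLp_const _)
    have hG₂ : MemLp (fun x => U₂ x - δ • m₂) 2 K := hU₂2.sub (memLp_const _)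
    have hint1 : Integrable (fun x => (Θ x - δ * mΘ) • (U₁ x - δ • m₁)) K :=
      integrable_smul_L2 hθ2 hG₁
    have hint2 : Integrable (fun x => (Θ x - δ * mΘ) • (U₂ x - δ • m₂)) K :=
      integrable_smul_L2 hθ2 hG₂
    clear_value ζ M mΘ m₁ m₂
    -- the difference of the Gammas
    have hGdiff : Gamma K δ ζ Θ U₁ - Gamma K δ ζ Θ U₂
        = (∫ x, (Θ x - δ * mΘ) • ((U₁ x - U₂ x) - δ • (m₁ - m₂)) ∂K)
          + ((1 - ζ) * δ * mΘ) • (m₁ - m₂) := by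
      have key : (∫ x, (Θ x - δ * mΘ) • (U₁ x - δ • m₁) ∂K)
          - ∫ x, (Θ x - δ * mΘ) • (U₂ x - δ • m₂) ∂K
          = ∫ x, (Θ x - δ * mΘ) • ((U₁ x - U₂ x) - δ • (m₁ - m₂)) ∂K := by
        rw [← integral_sub hint1 hint2]
        refine integral_congr_ae (ae_of_all _ fun x => ?_)
        show (Θ x - δ * mΘ) • (U₁ x - δ • m₁) - (Θ x - δ * mΘ) • (U₂ x - δ • m₂)
            = (Θ x - δ * mΘ) • ((U₁ x - U₂ x) - δ • (m₁ - m₂))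
        rw [← smul_sub]
        congr 1
        rw [smul_sub]
        abel
      simp only [Gamma, ← hmΘdef, ← hm₁def, ← hm₂def]
      rw [← key, smul_sub]
      abel
    rw [hGdiff]
    -- Cauchy–Schwarz for the main term
    have hcs : ‖∫ x, (Θ x - δ * mΘ) • ((U₁ x - U₂ x) - δ • (m₁ - m₂)) ∂K‖ ^ 2
        ≤ (∫ x, (Θ x - δ * mΘ) ^ 2 ∂K) * (∫ x, ‖(U₁ x - U₂ x) - δ • (m₁ - m₂)‖ ^ 2 ∂K) :=
      cs_smul hθ2 hW2
    have hBnn : 0 ≤ ∫ x, ‖(U₁ x - U₂ x) - δ • (m₁ - m₂)‖ ^ 2 ∂K :=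
      integral_nonneg fun x => sq_nonneg _
    -- expansion of the centered second moment of Θ
    have hexp : ∫ x, (Θ x - δ * mΘ) ^ 2 ∂K
        = (∫ x, Θ x ^ 2 ∂K) - 2 * (δ * mΘ) * mΘ + (δ * mΘ) ^ 2 * M := by
      have hsq : Integrable (fun x => Θ x ^ 2) K := hΘ2.integrable_sq
      have h2nd : Integrable (fun x => 2 * Θ x * (δ * mΘ)) K :=
        (hΘint.const_mul 2).mul_const (δ * mΘ)
      have : ∀ x, (Θ x - δ * mΘ) ^ 2 = Θ x ^ 2 - 2 * Θ x * (δ * mΘ) + (δ * mΘ) ^ 2 :=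
        fun x => by ring
      simp only [this]
      have hsub : Integrable (fun x => Θ x ^ 2 - 2 * Θ x * (δ * mΘ)) K := hsq.sub h2nd
      rw [integral_add hsub (integrable_const _), integral_sub hsq h2nd,
        integral_const, integral_mul_const, integral_const_mul]
      rw [← hmΘdef, measureReal_def, ← hMdef]
      rw [smul_eq_mul]
      ring
    have hA1 : ∫ x, (Θ x - δ * mΘ) ^ 2 ∂K ≤ 1 := by
      rw [hexp]
      nlinarith [sq_nonneg mΘ, mul_nonneg hδ (sq_nonneg mΘ), hζeq, hζ1]
    have hAnn : 0 ≤ ∫ x, (Θ x - δ * mΘ) ^ 2 ∂K := integral_nonneg fun x => sq_nonneg _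
    -- Cauchy–Schwarz for mΘ
    have hcs1 : mΘ ^ 2 ≤ (∫ x, Θ x ^ 2 ∂K) * M := by
      have h := cs_smul (E := ℝ) hΘ2 (memLp_const 1)
      simp only [smul_eq_mul, mul_one, norm_one, one_pow, integral_const, smul_eq_mul] at h
      rw [← hmΘdef, measureReal_def, ← hMdef] at h
      calc mΘ ^ 2 = ‖mΘ‖ ^ 2 := by rw [Real.norm_eq_abs, sq_abs]
        _ ≤ (∫ x, Θ x ^ 2 ∂K) * M := h
    have h5 : δ * mΘ ^ 2 ≤ 1 := by
      have d1 : δ * mΘ ^ 2 ≤ δ * ((∫ x, Θ x ^ 2 ∂K) * M) :=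
        mul_le_mul_of_nonneg_left hcs1 hδ
      nlinarith [hζeq, hζ1, hTnn]
    -- bound the second term
    have hQ : ‖((1 - ζ) * δ * mΘ) • (m₁ - m₂)‖ ^ 2 ≤ (1 - ζ) * δ * ‖m₁ - m₂‖ ^ 2 := by
      rw [norm_smul, Real.norm_eq_abs, mul_pow, sq_abs]
      have hrw : ((1 - ζ) * δ * mΘ) ^ 2 * ‖m₁ - m₂‖ ^ 2
          = ((1 - ζ) * δ * mΘ ^ 2) * ((1 - ζ) * δ * ‖m₁ - m₂‖ ^ 2) := by ring
      rw [hrw]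
      have hcnn : 0 ≤ (1 - ζ) * δ * ‖m₁ - m₂‖ ^ 2 :=
        mul_nonneg (mul_nonneg (by linarith) hδ) (sq_nonneg _)
      have hle1 : (1 - ζ) * δ * mΘ ^ 2 ≤ 1 := by
        nlinarith [mul_nonneg hδ (sq_nonneg mΘ)]
      exact mul_le_of_le_one_left hcnn hle1
    -- unfold the RHS
    simp only [tnormSq, hmV, ← hm₁def, ← hm₂def]
    -- final numeric combination
    set P := ∫ x, (Θ x - δ * mΘ) • ((U₁ x - U₂ x) - δ • (m₁ - m₂)) ∂K with hPdef
    set Q := ((1 - ζ) * δ * mΘ) • (m₁ - m₂) with hQdef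
    have hPQ : ‖P + Q‖ ≤ ‖P‖ + ‖Q‖ := norm_add_le _ _
    have hPle : ‖P‖ ^ 2 ≤ ∫ x, ‖(U₁ x - U₂ x) - δ • (m₁ - m₂)‖ ^ 2 ∂K := by
      nlinarith [hcs, hA1, hAnn, hBnn]
    have h6 : ‖P + Q‖ ^ 2 ≤ (‖P‖ + ‖Q‖) ^ 2 := pow_le_pow_left₀ (norm_nonneg _) hPQ 2
    nlinarith [h6, hPle, hQ, sq_nonneg (‖P‖ - ‖Q‖)]

end
end

section
/- Let d ≥ 1, let (Ω, 𝔉, P) be a probability space, let I be a nonempty index set, and for each a ∈ I let (ξ^{a,i})_{i∈ℕ} be a sequence of ℝ^d-valued random vectors on Ω that are independent and identically distributed. Assume the family {|ξ^{a,1}|²}_{a∈I} is bounded in L¹ and uniformly integrable, i.e. sup_{a∈I} E[|ξ^{a,1}|²] < ∞ and for every ε > 0 there exists R > 0 with sup_{a∈I} E[|ξ^{a,1}|²·𝟙_{{|ξ^{a,1}|² ≥ R}}] ≤ ε. Then for every ε > 0 there exists N₀ ∈ ℕ, independent of a ∈ I, such that for all N ≥ N₀ and all a ∈ I, ∫⁻_Ω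 W₂²( L^N(ξ^{a,1}(ω),…,ξ^{a,N}(ω)), law(ξ^{a,1}) ) dP(ω) ≤ ε, where the integral is the Lebesgue integral of the nonnegative integrand. -/
open MeasureTheory ProbabilityTheory
open scoped ENNReal NNReal

noncomputable section

/-- The squared Wasserstein distance of order 2 between two Borel measures on a metric
space, defined as the infimum over all couplings (probability measures on the product
with the prescribed marginals) of the integral of the squared distance. -/
def W2sq {E : Type*} [MeasurableSpace E] [PseudoMetricSpace E] (μ ν : Measure E) : ℝ≥0∞ :=
  ⨅ π : {π : Measure (E × E) //
      IsProbabilityMeasure π ∧ π.map Prod.fst = μ ∧ π.map Prod.snd = ν},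
    ∫⁻ p, ENNReal.ofReal (dist p.1 p.2 ^ 2) ∂(π : Measure (E × E))

/-- The empirical measure `L^N(x) = (1/N) ∑_{i=1}^N δ_{x_i}`. -/
def empMeasure {E : Type*} [MeasurableSpace E] (N : ℕ) (x : Fin N → E) : Measure E :=
  (N : ℝ≥0∞)⁻¹ • ∑ i, Measure.dirac (x i)

section Helpers

variable {E : Type*} [MeasurableSpace E]

lemma normRestrict_le (ρ : Measure E) (s : Set E) {c : ℝ≥0∞} (hc : c ≤ ρ s)
    (htop : ρ s ≠ ⊤) : c • ((ρ s)⁻¹ • ρ.restrict s) ≤ ρ.restrict s := by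
  rw [smul_smul]
  rcases eq_or_ne (ρ s) 0 with h0 | h0
  · have : ρ.restrict s = 0 := Measure.restrict_eq_zero.mpr h0
    simp [this]
  · have hle : c * (ρ s)⁻¹ ≤ 1 := by
      calc c * (ρ s)⁻¹ ≤ ρ s * (ρ s)⁻¹ := mul_le_mul_left hc _
      _ = 1 := ENNReal.mul_inv_cancel h0 htop
    refine Measure.le_iff'.mpr fun t => ?_
    rw [Measure.smul_apply, smul_eq_mul]
    exact mul_le_of_le_one_left zero_le hle

lemma normRestrict_apply (ρ : Measure E) {s S : Set E}
    (hS : MeasurableSet S) (hsub : s ⊆ S) {c : ℝ≥0∞} (hc : c ≤ ρ s) (htop : ρ s ≠ ⊤) :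
    (c • ((ρ s)⁻¹ • ρ.restrict s)) S = c := by
  rw [Measure.smul_apply, Measure.smul_apply, Measure.restrict_apply hS,
    Set.inter_eq_self_of_subset_right hsub]
  rcases eq_or_ne (ρ s) 0 with h0 | h0
  · have hc0 : c = 0 := le_antisymm (h0 ▸ hc) zero_le
    simp [h0, hc0]
  · rw [smul_eq_mul, smul_eq_mul, ENNReal.inv_mul_cancel h0 htop, mul_one]

lemma normRestrict_univ_le_one (ρ : Measure E) (s : Set E) :
    ((ρ s)⁻¹ • ρ.restrict s) Set.univ ≤ 1 := by
  rw [Measure.smul_apply, Measure.restrict_apply MeasurableSet.univ, Set.univ_inter,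
    smul_eq_mul]
  rcases eq_or_ne (ρ s) 0 with h0 | h0
  · simp [h0]
  · rcases eq_or_ne (ρ s) ⊤ with ht | ht
    · simp [ht]
    · rw [ENNReal.inv_mul_cancel h0 ht]

lemma measure_map_finset_sum' {F : Type*} [MeasurableSpace F] {ι : Type*} (s : Finset ι)
    (m : ι → Measure E) {f : E → F} (hf : Measurable f) :
    (∑ i ∈ s, m i).map f = ∑ i ∈ s, (m i).map f := by
  classical
  induction s using Finset.induction_on with
  | empty => simp
  | insert _ _ h ih => simp [Finset.sum_insert h, Measure.map_add _ _ hf, ih]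

end Helpers

section CouplingLemma

lemma dist_sq_le {E : Type*} [NormedAddCommGroup E] (x y : E) :
    ENNReal.ofReal (dist x y ^ 2)
      ≤ 2 * ENNReal.ofReal (‖x‖ ^ 2) + 2 * ENNReal.ofReal (‖y‖ ^ 2) := by
  have h1 : dist x y ≤ ‖x‖ + ‖y‖ := by rw [dist_eq_norm]; exact norm_sub_le _ _
  have h2 : dist x y ^ 2 ≤ 2 * ‖x‖ ^ 2 + 2 * ‖y‖ ^ 2 := by
    have h3 : dist x y ^ 2 ≤ (‖x‖ + ‖y‖) ^ 2 := pow_le_pow_left₀ dist_nonneg h1 2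
    nlinarith [sq_nonneg (‖x‖ - ‖y‖)]
  calc ENNReal.ofReal (dist x y ^ 2) ≤ ENNReal.ofReal (2 * ‖x‖ ^ 2 + 2 * ‖y‖ ^ 2) :=
        ENNReal.ofReal_le_ofReal h2
  _ = 2 * ENNReal.ofReal (‖x‖ ^ 2) + 2 * ENNReal.ofReal (‖y‖ ^ 2) := by
      rw [ENNReal.ofReal_add (by positivity) (by positivity),
        ENNReal.ofReal_mul (by norm_num), ENNReal.ofReal_mul (by norm_num)]
      norm_num

lemma W2sq_le_of_partition
    {E : Type*} [NormedAddCommGroup E] [MeasurableSpace E] [BorelSpace E]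
    [SecondCountableTopology E]
    (μ ν : Measure E) [IsProbabilityMeasure μ] [IsProbabilityMeasure ν]
    {ι : Type*} [Fintype ι] (A : ι → Set E) (R δ : ℝ)
    (hAmeas : ∀ j, MeasurableSet (A j))
    (hdisj : Pairwise (Function.onFun Disjoint A))
    (hcover : (⋃ j, A j) = {x : E | ‖x‖ ^ 2 < R})
    (hdiam : ∀ j, ∀ x ∈ A j, ∀ y ∈ A j, dist x y ≤ δ) :
    W2sq μ ν ≤ ENNReal.ofReal (δ ^ 2)
      + 2 * ENNReal.ofReal R * (∑ j, ((μ (A j) - ν (A j)) + (ν (A j) - μ (A j))))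
      + 2 * ∫⁻ x in {x : E | R ≤ ‖x‖ ^ 2}, ENNReal.ofReal (‖x‖ ^ 2) ∂μ
      + 2 * ∫⁻ x in {x : E | R ≤ ‖x‖ ^ 2}, ENNReal.ofReal (‖x‖ ^ 2) ∂ν := by
  classical
  set B : Set E := {x : E | ‖x‖ ^ 2 < R} with hB
  have hnormsq : Measurable fun x : E => ‖x‖ ^ 2 := measurable_norm.pow_const 2
  have hBmeas : MeasurableSet B := measurableSet_lt hnormsq measurable_const
  have hT : {x : E | R ≤ ‖x‖ ^ 2} = Bᶜ := by ext x; simp [hB, not_lt]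
  rw [hT]
  set α : ι → ℝ≥0∞ := fun j => min (μ (A j)) (ν (A j)) with hα
  have hαμ : ∀ j, α j ≤ μ (A j) := fun j => min_le_left _ _
  have hαν : ∀ j, α j ≤ ν (A j) := fun j => min_le_right _ _
  have hμtop : ∀ j, μ (A j) ≠ ⊤ := fun j => measure_ne_top μ _
  have hνtop : ∀ j, ν (A j) ≠ ⊤ := fun j => measure_ne_top ν _
  set μ₁ : Measure E := ∑ j, α j • ((μ (A j))⁻¹ • μ.restrict (A j)) with hμ₁
  set ν₁ : Measure E := ∑ j, α j • ((ν (A j))⁻¹ • ν.restrict (A j)) with hν₁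
  have hμ₁S : ∀ {S : Set E}, MeasurableSet S → (⋃ j, A j) ⊆ S → μ₁ S = ∑ j, α j := by
    intro S hS hsub
    rw [hμ₁, Measure.finset_sum_apply]
    exact Finset.sum_congr rfl fun j _ =>
      normRestrict_apply μ hS ((Set.subset_iUnion A j).trans hsub) (hαμ j) (hμtop j)
  have hν₁S : ∀ {S : Set E}, MeasurableSet S → (⋃ j, A j) ⊆ S → ν₁ S = ∑ j, α j := by
    intro S hS hsub
    rw [hν₁, Measure.finset_sum_apply]
    exact Finset.sum_congr rfl fun j _ =>
      normRestrict_apply ν hS ((Set.subset_iUnion A j).trans hsub) (hαν j) (hνtop j)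
  have hμ₁le : μ₁ ≤ μ := by
    refine Measure.le_iff.mpr fun S hS => ?_
    rw [hμ₁, Measure.finset_sum_apply]
    have step : ∀ j, (α j • ((μ (A j))⁻¹ • μ.restrict (A j))) S ≤ μ (S ∩ A j) := by
      intro j
      have h := Measure.le_iff'.mp (normRestrict_le μ (A j) (hαμ j) (hμtop j)) S
      rwa [Measure.restrict_apply hS] at h
    refine le_trans (Finset.sum_le_sum fun j _ => step j) ?_
    calc ∑ j, μ (S ∩ A j) = ∑ j, (μ.restrict S) (A j) := by
          refine Finset.sum_congr rfl fun j _ => ?_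
          rw [Measure.restrict_apply' hS, Set.inter_comm]
    _ = (μ.restrict S) (⋃ j, A j) := by
          rw [measure_iUnion hdisj hAmeas, tsum_fintype]
    _ ≤ μ S := by
          rw [Measure.restrict_apply' hS]
          exact measure_mono Set.inter_subset_right
  have hν₁le : ν₁ ≤ ν := by
    refine Measure.le_iff.mpr fun S hS => ?_
    rw [hν₁, Measure.finset_sum_apply]
    have step : ∀ j, (α j • ((ν (A j))⁻¹ • ν.restrict (A j))) S ≤ ν (S ∩ A j) := by
      intro j
      have h := Measure.le_iff'.mp (normRestrict_le ν (A j) (hαν j) (hνtop j)) S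
      rwa [Measure.restrict_apply hS] at h
    refine le_trans (Finset.sum_le_sum fun j _ => step j) ?_
    calc ∑ j, ν (S ∩ A j) = ∑ j, (ν.restrict S) (A j) := by
          refine Finset.sum_congr rfl fun j _ => ?_
          rw [Measure.restrict_apply' hS, Set.inter_comm]
    _ = (ν.restrict S) (⋃ j, A j) := by
          rw [measure_iUnion hdisj hAmeas, tsum_fintype]
    _ ≤ ν S := by
          rw [Measure.restrict_apply' hS]
          exact measure_mono Set.inter_subset_right
  have hsas : ∑ j, α j ≤ 1 := by
    rw [← hμ₁S MeasurableSet.univ (Set.subset_univ _)]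
    exact (Measure.le_iff'.mp hμ₁le Set.univ).trans (by rw [measure_univ])
  have hsastop : (∑ j, α j) ≠ ⊤ := ne_top_of_le_ne_top ENNReal.one_ne_top hsas
  haveI hμ₁fin : IsFiniteMeasure μ₁ :=
    ⟨by rw [hμ₁S MeasurableSet.univ (Set.subset_univ _)]
        exact lt_of_le_of_lt hsas ENNReal.one_lt_top⟩
  haveI hν₁fin : IsFiniteMeasure ν₁ :=
    ⟨by rw [hν₁S MeasurableSet.univ (Set.subset_univ _)]
        exact lt_of_le_of_lt hsas ENNReal.one_lt_top⟩
  set μr : Measure E := μ - μ₁ with hμr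
  set νr : Measure E := ν - ν₁ with hνr
  have hμsplit : μr + μ₁ = μ := Measure.sub_add_cancel_of_le hμ₁le
  have hνsplit : νr + ν₁ = ν := Measure.sub_add_cancel_of_le hν₁le
  have hμr_univ : μr Set.univ = 1 - ∑ j, α j := by
    rw [hμr, Measure.sub_apply MeasurableSet.univ hμ₁le, measure_univ,
      hμ₁S MeasurableSet.univ (Set.subset_univ _)]
  have hνr_univ : νr Set.univ = 1 - ∑ j, α j := by
    rw [hνr, Measure.sub_apply MeasurableSet.univ hν₁le, measure_univ,
      hν₁S MeasurableSet.univ (Set.subset_univ _)]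
  set s : ℝ≥0∞ := μr Set.univ with hs
  have hsν : νr Set.univ = s := by rw [hνr_univ, ← hμr_univ]
  have hstop : s ≠ ⊤ := by
    rw [hμr_univ]
    exact ne_top_of_le_ne_top ENNReal.one_ne_top tsub_le_self
  haveI : IsFiniteMeasure μr := by rw [hμr]; infer_instance
  haveI : IsFiniteMeasure νr := by rw [hνr]; infer_instance
  set π₁ : Measure (E × E) :=
    ∑ j, α j • (((μ (A j))⁻¹ • μ.restrict (A j)).prod ((ν (A j))⁻¹ • ν.restrict (A j)))
    with hπ₁
  set π : Measure (E × E) := π₁ + s⁻¹ • (μr.prod νr) with hπ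
  have hunitν : ∀ j, α j ≠ 0 → ((ν (A j))⁻¹ • ν.restrict (A j)) Set.univ = 1 := by
    intro j h0
    have hν0 : ν (A j) ≠ 0 := by
      intro h; exact h0 (le_antisymm (h ▸ hαν j) zero_le)
    rw [Measure.smul_apply, Measure.restrict_apply MeasurableSet.univ, Set.univ_inter,
      smul_eq_mul, ENNReal.inv_mul_cancel hν0 (hνtop j)]
  have hunitμ : ∀ j, α j ≠ 0 → ((μ (A j))⁻¹ • μ.restrict (A j)) Set.univ = 1 := by
    intro j h0
    have hμ0 : μ (A j) ≠ 0 := by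
      intro h; exact h0 (le_antisymm (h ▸ hαμ j) zero_le)
    rw [Measure.smul_apply, Measure.restrict_apply MeasurableSet.univ, Set.univ_inter,
      smul_eq_mul, ENNReal.inv_mul_cancel hμ0 (hμtop j)]
  have hcellfst : ∀ j,
      (α j • (((μ (A j))⁻¹ • μ.restrict (A j)).prod
        ((ν (A j))⁻¹ • ν.restrict (A j)))).map Prod.fst
      = α j • ((μ (A j))⁻¹ • μ.restrict (A j)) := by
    intro j
    rw [Measure.map_smul, Measure.map_fst_prod]
    rcases eq_or_ne (α j) 0 with h0 | h0
    · simp [h0]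
    · rw [hunitν j h0, one_smul]
  have hcellsnd : ∀ j,
      (α j • (((μ (A j))⁻¹ • μ.restrict (A j)).prod
        ((ν (A j))⁻¹ • ν.restrict (A j)))).map Prod.snd
      = α j • ((ν (A j))⁻¹ • ν.restrict (A j)) := by
    intro j
    rw [Measure.map_smul, Measure.map_snd_prod]
    rcases eq_or_ne (α j) 0 with h0 | h0
    · simp [h0]
    · rw [hunitμ j h0, one_smul]
  have hπfst : π.map Prod.fst = μ := by
    rw [hπ, Measure.map_add _ _ measurable_fst, Measure.map_smul, hπ₁,
      measure_map_finset_sum' _ _ measurable_fst]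
    have h1 : (∑ j, (α j • (((μ (A j))⁻¹ • μ.restrict (A j)).prod
        ((ν (A j))⁻¹ • ν.restrict (A j)))).map Prod.fst) = μ₁ := by
      rw [hμ₁]; exact Finset.sum_congr rfl fun j _ => hcellfst j
    rw [h1, Measure.map_fst_prod, hsν, smul_smul]
    rcases eq_or_ne s 0 with h0 | h0
    · have hμr0 : μr = 0 := Measure.measure_univ_eq_zero.mp (hs.symm.trans h0)
      rw [h0, mul_zero, zero_smul, add_zero, ← hμsplit, hμr0, zero_add]
    · rw [ENNReal.inv_mul_cancel h0 hstop, one_smul, add_comm, hμsplit]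
  have hπsnd : π.map Prod.snd = ν := by
    rw [hπ, Measure.map_add _ _ measurable_snd, Measure.map_smul, hπ₁,
      measure_map_finset_sum' _ _ measurable_snd]
    have h1 : (∑ j, (α j • (((μ (A j))⁻¹ • μ.restrict (A j)).prod
        ((ν (A j))⁻¹ • ν.restrict (A j)))).map Prod.snd) = ν₁ := by
      rw [hν₁]; exact Finset.sum_congr rfl fun j _ => hcellsnd j
    rw [h1, Measure.map_snd_prod, ← hs, smul_smul]
    rcases eq_or_ne s 0 with h0 | h0
    · have hνr0 : νr = 0 := Measure.measure_univ_eq_zero.mp (hsν.trans h0)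
      rw [h0, mul_zero, zero_smul, add_zero, ← hνsplit, hνr0, zero_add]
    · rw [ENNReal.inv_mul_cancel h0 hstop, one_smul, add_comm, hνsplit]
  haveI hπprob : IsProbabilityMeasure π := ⟨by
    have h2 : π Set.univ = (π.map Prod.fst) Set.univ := by
      rw [Measure.map_apply measurable_fst MeasurableSet.univ, Set.preimage_univ]
    rw [h2, hπfst, measure_univ]⟩
  set f : E × E → ℝ≥0∞ := fun p => ENNReal.ofReal (dist p.1 p.2 ^ 2) with hf
  have hfmeas : Measurable f :=
    ENNReal.measurable_ofReal.comp ((measurable_fst.dist measurable_snd).pow_const 2)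
  have hW : W2sq μ ν ≤ ∫⁻ p, f p ∂π := by
    unfold W2sq; exact iInf_le (fun π' : {π : Measure (E × E) // IsProbabilityMeasure π ∧ π.map Prod.fst = μ ∧ π.map Prod.snd = ν} => ∫⁻ p, ENNReal.ofReal (dist p.1 p.2 ^ 2) ∂(π' : Measure (E × E))) ⟨π, hπprob, hπfst, hπsnd⟩
  have hπcost : ∫⁻ p, f p ∂π
      = (∑ j, α j * ∫⁻ p, f p ∂(((μ (A j))⁻¹ • μ.restrict (A j)).prod
          ((ν (A j))⁻¹ • ν.restrict (A j))))
        + s⁻¹ * ∫⁻ p, f p ∂(μr.prod νr) := by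
    rw [hπ, lintegral_add_measure, lintegral_smul_measure, hπ₁, lintegral_finset_sum_measure]
    congr 1
    exact Finset.sum_congr rfl fun j _ => lintegral_smul_measure _ _
  have hcell : ∀ j, ∫⁻ p, f p ∂(((μ (A j))⁻¹ • μ.restrict (A j)).prod
      ((ν (A j))⁻¹ • ν.restrict (A j))) ≤ ENNReal.ofReal (δ ^ 2) := by
    intro j
    set ρ : Measure (E × E) := ((μ (A j))⁻¹ • μ.restrict (A j)).prod
      ((ν (A j))⁻¹ • ν.restrict (A j)) with hρ
    have hAA : MeasurableSet (A j ×ˢ A j) := (hAmeas j).prod (hAmeas j)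
    have h1 : ((μ (A j))⁻¹ • μ.restrict (A j)) ((A j)ᶜ) = 0 := by
      rw [Measure.smul_apply, Measure.restrict_apply (hAmeas j).compl,
        Set.compl_inter_self, measure_empty, smul_eq_mul, mul_zero]
    have h2 : ((ν (A j))⁻¹ • ν.restrict (A j)) ((A j)ᶜ) = 0 := by
      rw [Measure.smul_apply, Measure.restrict_apply (hAmeas j).compl,
        Set.compl_inter_self, measure_empty, smul_eq_mul, mul_zero]
    have hnull : ρ ((A j ×ˢ A j)ᶜ) = 0 := by
      have hsub : (A j ×ˢ A j)ᶜ ⊆ ((A j)ᶜ ×ˢ Set.univ) ∪ (Set.univ ×ˢ (A j)ᶜ) := by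
        intro p hp
        rcases (not_and_or.mp (by simpa [Set.mem_prod] using hp) :
            p.1 ∉ A j ∨ p.2 ∉ A j) with h | h
        · exact Or.inl ⟨h, trivial⟩
        · exact Or.inr ⟨trivial, h⟩
      refine measure_mono_null hsub ?_
      refine le_antisymm (le_trans (measure_union_le _ _) ?_) zero_le
      rw [Measure.prod_prod, Measure.prod_prod, h1, h2, zero_mul, mul_zero, add_zero]
    calc ∫⁻ p, f p ∂ρ
        = ∫⁻ p in A j ×ˢ A j, f p ∂ρ + ∫⁻ p in (A j ×ˢ A j)ᶜ, f p ∂ρ :=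
          (lintegral_add_compl f hAA).symm
    _ = ∫⁻ p in A j ×ˢ A j, f p ∂ρ := by
          rw [setLIntegral_measure_zero _ _ hnull, add_zero]
    _ ≤ ∫⁻ _ in A j ×ˢ A j, ENNReal.ofReal (δ ^ 2) ∂ρ :=
          setLIntegral_mono' hAA fun p hp =>
            ENNReal.ofReal_le_ofReal
              (pow_le_pow_left₀ dist_nonneg (hdiam j p.1 hp.1 p.2 hp.2) 2)
    _ = ENNReal.ofReal (δ ^ 2) * ρ (A j ×ˢ A j) := setLIntegral_const _ _
    _ ≤ ENNReal.ofReal (δ ^ 2) * 1 := by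
          refine mul_le_mul_right ?_ _
          refine le_trans (measure_mono (Set.subset_univ _)) ?_
          rw [hρ, ← Set.univ_prod_univ, Measure.prod_prod]
          exact mul_le_one' (normRestrict_univ_le_one μ (A j)) (normRestrict_univ_le_one ν (A j))
    _ = ENNReal.ofReal (δ ^ 2) := mul_one _
  set g : E → ℝ≥0∞ := fun x => ENNReal.ofReal (‖x‖ ^ 2) with hg
  have hgmeas : Measurable g := ENNReal.measurable_ofReal.comp hnormsq
  have hcross : ∫⁻ p, f p ∂(μr.prod νr)
      ≤ 2 * (s * ∫⁻ x, g x ∂μr) + 2 * (s * ∫⁻ x, g x ∂νr) := by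
    have e1 : ∫⁻ p : E × E, g p.1 ∂(μr.prod νr) = s * ∫⁻ x, g x ∂μr := by
      rw [← lintegral_map hgmeas measurable_fst, Measure.map_fst_prod, hsν,
        lintegral_smul_measure, smul_eq_mul]
    have e2 : ∫⁻ p : E × E, g p.2 ∂(μr.prod νr) = s * ∫⁻ x, g x ∂νr := by
      rw [← lintegral_map hgmeas measurable_snd, Measure.map_snd_prod, ← hs,
        lintegral_smul_measure, smul_eq_mul]
    calc ∫⁻ p, f p ∂(μr.prod νr)
        ≤ ∫⁻ p : E × E, (2 * g p.1 + 2 * g p.2) ∂(μr.prod νr) :=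
          lintegral_mono fun p => dist_sq_le p.1 p.2
    _ = 2 * ∫⁻ p : E × E, g p.1 ∂(μr.prod νr) + 2 * ∫⁻ p : E × E, g p.2 ∂(μr.prod νr) := by
          have m1 : Measurable fun p : E × E => g p.1 := hgmeas.comp measurable_fst
          have m2 : Measurable fun p : E × E => g p.2 := hgmeas.comp measurable_snd
          rw [lintegral_add_left (m1.const_mul 2), lintegral_const_mul 2 m1,
            lintegral_const_mul 2 m2]
    _ = 2 * (s * ∫⁻ x, g x ∂μr) + 2 * (s * ∫⁻ x, g x ∂νr) := by rw [e1, e2]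
  have hss : s⁻¹ * s ≤ 1 := by
    rcases eq_or_ne s 0 with h0 | h0
    · rw [h0, mul_zero]; exact zero_le_one
    · rw [ENNReal.inv_mul_cancel h0 hstop]
  have hcross2 : s⁻¹ * ∫⁻ p, f p ∂(μr.prod νr)
      ≤ 2 * ∫⁻ x, g x ∂μr + 2 * ∫⁻ x, g x ∂νr := by
    calc s⁻¹ * ∫⁻ p, f p ∂(μr.prod νr)
        ≤ s⁻¹ * (2 * (s * ∫⁻ x, g x ∂μr) + 2 * (s * ∫⁻ x, g x ∂νr)) :=
          mul_le_mul_right hcross _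
    _ = (s⁻¹ * s) * (2 * ∫⁻ x, g x ∂μr) + (s⁻¹ * s) * (2 * ∫⁻ x, g x ∂νr) := by ring
    _ ≤ 1 * (2 * ∫⁻ x, g x ∂μr) + 1 * (2 * ∫⁻ x, g x ∂νr) :=
          add_le_add (mul_le_mul_left hss _) (mul_le_mul_left hss _)
    _ = 2 * ∫⁻ x, g x ∂μr + 2 * ∫⁻ x, g x ∂νr := by rw [one_mul, one_mul]
  have hterm : ∀ j, μ (A j) ≤ (μ (A j) - ν (A j)) + α j := by
    intro j
    rcases le_total (μ (A j)) (ν (A j)) with h | h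
    · rw [hα]; simp only [min_eq_left h]; exact le_add_self
    · rw [hα]; simp only [min_eq_right h]; exact le_tsub_add
  have hterm' : ∀ j, ν (A j) ≤ (ν (A j) - μ (A j)) + α j := by
    intro j
    rcases le_total (ν (A j)) (μ (A j)) with h | h
    · rw [hα]; simp only [min_eq_right h]; exact le_add_self
    · rw [hα]; simp only [min_eq_left h]; exact le_tsub_add
  have hIμ : ∫⁻ x, g x ∂μr
      ≤ ENNReal.ofReal R * (∑ j, (μ (A j) - ν (A j))) + ∫⁻ x in Bᶜ, g x ∂μ := by
    have h1 : ∫⁻ x, g x ∂μr = ∫⁻ x in B, g x ∂μr + ∫⁻ x in Bᶜ, g x ∂μr :=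
      (lintegral_add_compl g hBmeas).symm
    have h2 : ∫⁻ x in B, g x ∂μr ≤ ENNReal.ofReal R * μr B := by
      calc ∫⁻ x in B, g x ∂μr ≤ ∫⁻ _ in B, ENNReal.ofReal R ∂μr :=
            setLIntegral_mono' hBmeas fun x hx =>
              ENNReal.ofReal_le_ofReal (le_of_lt hx)
      _ = ENNReal.ofReal R * μr B := setLIntegral_const _ _
    have h3 : μr B ≤ ∑ j, (μ (A j) - ν (A j)) := by
      have hμB : μ B = ∑ j, μ (A j) := by
        rw [← hcover, measure_iUnion hdisj hAmeas, tsum_fintype]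
      have hμ₁B : μ₁ B = ∑ j, α j := hμ₁S hBmeas (subset_of_eq hcover)
      rw [hμr, Measure.sub_apply hBmeas hμ₁le, hμB, hμ₁B]
      calc (∑ j, μ (A j)) - ∑ j, α j
          ≤ (∑ j, ((μ (A j) - ν (A j)) + α j)) - ∑ j, α j :=
            tsub_le_tsub_right (Finset.sum_le_sum fun j _ => hterm j) _
      _ = ((∑ j, (μ (A j) - ν (A j))) + ∑ j, α j) - ∑ j, α j := by
            rw [Finset.sum_add_distrib]
      _ = ∑ j, (μ (A j) - ν (A j)) := ENNReal.add_sub_cancel_right hsastop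
    have h4 : ∫⁻ x in Bᶜ, g x ∂μr ≤ ∫⁻ x in Bᶜ, g x ∂μ :=
      lintegral_mono' (Measure.restrict_mono subset_rfl (hμr ▸ Measure.sub_le)) le_rfl
    calc ∫⁻ x, g x ∂μr = ∫⁻ x in B, g x ∂μr + ∫⁻ x in Bᶜ, g x ∂μr := h1
    _ ≤ ENNReal.ofReal R * (∑ j, (μ (A j) - ν (A j))) + ∫⁻ x in Bᶜ, g x ∂μ :=
          add_le_add (h2.trans (mul_le_mul_right h3 _)) h4
  have hIν : ∫⁻ x, g x ∂νr
      ≤ ENNReal.ofReal R * (∑ j, (ν (A j) - μ (A j))) + ∫⁻ x in Bᶜ, g x ∂ν := by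
    have h1 : ∫⁻ x, g x ∂νr = ∫⁻ x in B, g x ∂νr + ∫⁻ x in Bᶜ, g x ∂νr :=
      (lintegral_add_compl g hBmeas).symm
    have h2 : ∫⁻ x in B, g x ∂νr ≤ ENNReal.ofReal R * νr B := by
      calc ∫⁻ x in B, g x ∂νr ≤ ∫⁻ _ in B, ENNReal.ofReal R ∂νr :=
            setLIntegral_mono' hBmeas fun x hx =>
              ENNReal.ofReal_le_ofReal (le_of_lt hx)
      _ = ENNReal.ofReal R * νr B := setLIntegral_const _ _
    have h3 : νr B ≤ ∑ j, (ν (A j) - μ (A j)) := by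
      have hνB : ν B = ∑ j, ν (A j) := by
        rw [← hcover, measure_iUnion hdisj hAmeas, tsum_fintype]
      have hν₁B : ν₁ B = ∑ j, α j := hν₁S hBmeas (subset_of_eq hcover)
      rw [hνr, Measure.sub_apply hBmeas hν₁le, hνB, hν₁B]
      calc (∑ j, ν (A j)) - ∑ j, α j
          ≤ (∑ j, ((ν (A j) - μ (A j)) + α j)) - ∑ j, α j :=
            tsub_le_tsub_right (Finset.sum_le_sum fun j _ => hterm' j) _
      _ = ((∑ j, (ν (A j) - μ (A j))) + ∑ j, α j) - ∑ j, α j := by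
            rw [Finset.sum_add_distrib]
      _ = ∑ j, (ν (A j) - μ (A j)) := ENNReal.add_sub_cancel_right hsastop
    have h4 : ∫⁻ x in Bᶜ, g x ∂νr ≤ ∫⁻ x in Bᶜ, g x ∂ν :=
      lintegral_mono' (Measure.restrict_mono subset_rfl (hνr ▸ Measure.sub_le)) le_rfl
    calc ∫⁻ x, g x ∂νr = ∫⁻ x in B, g x ∂νr + ∫⁻ x in Bᶜ, g x ∂νr := h1
    _ ≤ ENNReal.ofReal R * (∑ j, (ν (A j) - μ (A j))) + ∫⁻ x in Bᶜ, g x ∂ν :=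
          add_le_add (h2.trans (mul_le_mul_right h3 _)) h4
  calc W2sq μ ν ≤ ∫⁻ p, f p ∂π := hW
  _ = (∑ j, α j * ∫⁻ p, f p ∂(((μ (A j))⁻¹ • μ.restrict (A j)).prod
        ((ν (A j))⁻¹ • ν.restrict (A j))))
      + s⁻¹ * ∫⁻ p, f p ∂(μr.prod νr) := hπcost
  _ ≤ (∑ j, α j * ENNReal.ofReal (δ ^ 2))
      + (2 * ∫⁻ x, g x ∂μr + 2 * ∫⁻ x, g x ∂νr) :=
        add_le_add (Finset.sum_le_sum fun j _ => mul_le_mul_right (hcell j) _) hcross2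
  _ ≤ 1 * ENNReal.ofReal (δ ^ 2)
      + (2 * (ENNReal.ofReal R * (∑ j, (μ (A j) - ν (A j))) + ∫⁻ x in Bᶜ, g x ∂μ)
        + 2 * (ENNReal.ofReal R * (∑ j, (ν (A j) - μ (A j))) + ∫⁻ x in Bᶜ, g x ∂ν)) := by
        refine add_le_add ?_ (add_le_add (mul_le_mul_right hIμ 2) (mul_le_mul_right hIν 2))
        rw [← Finset.sum_mul]
        exact mul_le_mul_left hsas _
  _ = ENNReal.ofReal (δ ^ 2)
      + 2 * ENNReal.ofReal R * (∑ j, ((μ (A j) - ν (A j)) + (ν (A j) - μ (A j))))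
      + 2 * ∫⁻ x in Bᶜ, g x ∂μ + 2 * ∫⁻ x in Bᶜ, g x ∂ν := by
        rw [Finset.sum_add_distrib]
        ring

end CouplingLemma

section Partition

lemma exists_partition (d : ℕ) {R δ : ℝ} (hR : 0 < R) (hδ : 0 < δ) :
    ∃ (ι : Type) (_ : Fintype ι) (A : ι → Set (EuclideanSpace ℝ (Fin d))),
      (∀ j, MeasurableSet (A j)) ∧ Pairwise (Function.onFun Disjoint A) ∧
      (⋃ j, A j) = {x : EuclideanSpace ℝ (Fin d) | ‖x‖ ^ 2 < R} ∧
      (∀ j, ∀ x ∈ A j, ∀ y ∈ A j, dist x y ≤ δ) := by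
  classical
  set h : ℝ := δ / (Real.sqrt d + 1) with hh
  have hd0 : (0:ℝ) ≤ Real.sqrt d := Real.sqrt_nonneg _
  have hhpos : 0 < h := div_pos hδ (by linarith)
  set M : ℤ := ⌈Real.sqrt R / h⌉ with hM
  set ι : Type := Fin d → {z : ℤ // z ∈ Finset.Icc (-M) M} with hι
  set A : ι → Set (EuclideanSpace ℝ (Fin d)) := fun k =>
    {x | ‖x‖ ^ 2 < R ∧ ∀ i, ((k i : ℤ) : ℝ) * h ≤ x i ∧ x i < (((k i : ℤ) : ℝ) + 1) * h}
    with hA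
  have hcoord : ∀ i : Fin d, Measurable fun x : EuclideanSpace ℝ (Fin d) => x i :=
    fun i => (EuclideanSpace.proj i).continuous.measurable
  have hnormsq : Measurable fun x : EuclideanSpace ℝ (Fin d) => ‖x‖ ^ 2 :=
    measurable_norm.pow_const 2
  -- key floor characterization
  have hfloor : ∀ (m : ℤ) (u : ℝ), (m : ℝ) * h ≤ u → u < ((m : ℝ) + 1) * h → ⌊u / h⌋ = m := by
    intro m u h1 h2
    rw [Int.floor_eq_iff]
    constructor
    · exact (le_div_iff₀ hhpos).mpr (by linarith)
    · exact (div_lt_iff₀ hhpos).mpr (by linarith)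
  refine ⟨ι, inferInstance, A, ?_, ?_, ?_, ?_⟩
  · intro k
    have : A k = {x : EuclideanSpace ℝ (Fin d) | ‖x‖ ^ 2 < R} ∩
        ⋂ i, ({x : EuclideanSpace ℝ (Fin d) | ((k i : ℤ) : ℝ) * h ≤ x i}
          ∩ {x : EuclideanSpace ℝ (Fin d) | x i < (((k i : ℤ) : ℝ) + 1) * h}) := by
      rw [hA]; ext x
      simp only [Set.mem_setOf_eq, Set.mem_inter_iff, Set.mem_iInter]
    rw [this]
    exact (measurableSet_lt hnormsq measurable_const).inter
      (MeasurableSet.iInter fun i =>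
        (measurableSet_le measurable_const (hcoord i)).inter
          (measurableSet_lt (hcoord i) measurable_const))
  · intro k l hkl
    rcases Function.ne_iff.mp hkl with ⟨i, hi⟩
    refine Set.disjoint_left.mpr fun x hx hx' => ?_
    have e1 : ⌊x i / h⌋ = (k i : ℤ) := hfloor _ _ (hx.2 i).1 (hx.2 i).2
    have e2 : ⌊x i / h⌋ = (l i : ℤ) := hfloor _ _ (hx'.2 i).1 (hx'.2 i).2
    exact hi (Subtype.ext (e1.symm.trans e2))
  · apply Set.Subset.antisymm
    · exact Set.iUnion_subset fun k x hx => hx.1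
    · intro x hx
      have hxi : ∀ i, |x i| ≤ Real.sqrt R := by
        intro i
        have h1 : (x i) ^ 2 ≤ ‖x‖ ^ 2 := by
          rw [EuclideanSpace.norm_eq, Real.sq_sqrt (by positivity)]
          have : ‖x i‖ ^ 2 ≤ ∑ i', ‖x i'‖ ^ 2 :=
            Finset.single_le_sum (f := fun i' => ‖x i'‖ ^ 2)
              (fun i' _ => by positivity) (Finset.mem_univ i)
          simpa [Real.norm_eq_abs, sq_abs] using this
        have h2 : (x i) ^ 2 ≤ R := le_trans h1 (le_of_lt hx)
        calc |x i| = Real.sqrt ((x i) ^ 2) := (Real.sqrt_sq_eq_abs _).symm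
        _ ≤ Real.sqrt R := Real.sqrt_le_sqrt h2
      have hmem : ∀ i, ⌊x i / h⌋ ∈ Finset.Icc (-M) M := by
        intro i
        rw [Finset.mem_Icc]
        constructor
        · have hneg : -Real.sqrt R ≤ x i := neg_le_of_abs_le (hxi i)
          have : (-M : ℤ) = ⌊-(Real.sqrt R / h)⌋ := by rw [Int.floor_neg, hM]
          rw [this]
          apply Int.floor_le_floor
          rw [← neg_div]
          exact (div_le_div_iff_of_pos_right hhpos).mpr hneg
        · refine le_trans (Int.floor_le_floor ?_) (Int.floor_le_ceil _)
          exact (div_le_div_iff_of_pos_right hhpos).mpr ((le_abs_self _).trans (hxi i))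
      refine Set.mem_iUnion.mpr ⟨fun i => ⟨⌊x i / h⌋, hmem i⟩, hx, fun i => ?_⟩
      constructor
      · exact (le_div_iff₀ hhpos).mp (Int.floor_le _)
      · have := Int.lt_floor_add_one (x i / h)
        calc x i = (x i / h) * h := by field_simp
        _ < ((⌊x i / h⌋ : ℝ) + 1) * h := by
            apply mul_lt_mul_of_pos_right ?_ hhpos
            exact_mod_cast this
  · intro k x hx y hy
    have hterm : ∀ i, dist (x i) (y i) ^ 2 ≤ h ^ 2 := by
      intro i
      have h1 := (hx.2 i).1; have h2 := (hx.2 i).2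
      have h3 := (hy.2 i).1; have h4 := (hy.2 i).2
      have habs : |x i - y i| ≤ h := by
        rw [abs_le]; constructor <;> nlinarith
      calc dist (x i) (y i) ^ 2 = |x i - y i| ^ 2 := by rw [Real.dist_eq]
      _ ≤ h ^ 2 := by nlinarith [abs_nonneg (x i - y i)]
    calc dist x y = Real.sqrt (∑ i, dist (x i) (y i) ^ 2) := EuclideanSpace.dist_eq x y
    _ ≤ Real.sqrt (d * h ^ 2) := by
        apply Real.sqrt_le_sqrt
        calc ∑ i, dist (x i) (y i) ^ 2 ≤ ∑ _i : Fin d, h ^ 2 :=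
              Finset.sum_le_sum fun i _ => hterm i
        _ = d * h ^ 2 := by rw [Finset.sum_const, Finset.card_univ, Fintype.card_fin,
              nsmul_eq_mul]
    _ = Real.sqrt d * h := by
        rw [Real.sqrt_mul (Nat.cast_nonneg d) (h ^ 2), Real.sqrt_sq hhpos.le]
    _ ≤ δ := by
        rw [hh, ← mul_div_assoc, div_le_iff₀ (by linarith)]
        nlinarith [hδ.le, hd0]

end Partition

section Empirical

variable {E : Type*} [MeasurableSpace E]

lemma empMeasure_apply {N : ℕ} (hN : N ≠ 0) (x : Fin N → E)
    {A : Set E} (hA : MeasurableSet A) :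
    empMeasure N x A
      = ENNReal.ofReal ((N : ℝ)⁻¹ * ∑ i : Fin N, A.indicator (fun _ => (1:ℝ)) (x i)) := by
  have hNpos : (0:ℝ) < N := by positivity
  rw [empMeasure, Measure.smul_apply, Measure.finset_sum_apply, smul_eq_mul,
    ENNReal.ofReal_mul (by positivity),
    ENNReal.ofReal_sum_of_nonneg (fun i _ => Set.indicator_nonneg (fun _ _ => zero_le_one) _)]
  congr 1
  · rw [← ENNReal.ofReal_natCast N, ← ENNReal.ofReal_inv_of_pos hNpos]
  · refine Finset.sum_congr rfl fun i _ => ?_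
    rw [Measure.dirac_apply' _ hA]
    by_cases h : x i ∈ A
    · simp [Set.indicator_of_mem h]
    · simp [Set.indicator_of_notMem h]

instance empMeasure_prob {N : ℕ} [NeZero N] (x : Fin N → E) :
    IsProbabilityMeasure (empMeasure N x) := by
  constructor
  rw [empMeasure, Measure.smul_apply, Measure.finset_sum_apply, smul_eq_mul]
  have : ∀ i : Fin N, Measure.dirac (x i) Set.univ = 1 := fun i => by simp
  rw [Finset.sum_congr rfl fun i _ => this i, Finset.sum_const, Finset.card_univ,
    Fintype.card_fin, nsmul_eq_mul, mul_one, ENNReal.inv_mul_cancel]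
  · exact Nat.cast_ne_zero.mpr (NeZero.ne N)
  · exact ENNReal.natCast_ne_top N

end Empirical

section Discrepancy

lemma expectation_discrepancy
    {E : Type*} [MeasurableSpace E]
    {Ω : Type*} [MeasurableSpace Ω] (P : Measure Ω) [IsProbabilityMeasure P]
    (ξ : ℕ → Ω → E) (hmeas : ∀ i, Measurable (ξ i))
    (hindep : iIndepFun ξ P)
    (hident : ∀ i j, IdentDistrib (ξ i) (ξ j) P P)
    {A : Set E} (hA : MeasurableSet A) {N : ℕ} (hN : N ≠ 0) {t : ℝ} (ht : 0 < t) :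
    ∫⁻ ω, ENNReal.ofReal
        |(N : ℝ)⁻¹ * (∑ i : Fin N, A.indicator (fun _ => (1:ℝ)) (ξ (i : ℕ) ω))
          - ((P.map (ξ 0)) A).toReal| ∂P
      ≤ ENNReal.ofReal (t + 1 / (t * N)) := by
  have hNpos : (0:ℝ) < N := by positivity
  set p : ℝ := ((P.map (ξ 0)) A).toReal with hp
  set φ : E → ℝ := fun x => A.indicator (fun _ => (1:ℝ)) x - p with hφ
  have hφmeas : Measurable φ := (measurable_const.indicator hA).sub measurable_const
  set Z : ℕ → Ω → ℝ := fun i ω => φ (ξ i ω) with hZ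
  have hZmeas : ∀ i, Measurable (Z i) := fun i => hφmeas.comp (hmeas i)
  have hmapA : ∀ i : ℕ, P (ξ i ⁻¹' A) = (P.map (ξ 0)) A := by
    intro i
    rw [← Measure.map_apply (hmeas i) hA, (hident i 0).map_eq]
  have hp01 : 0 ≤ p ∧ p ≤ 1 := by
    constructor
    · exact ENNReal.toReal_nonneg
    · rw [hp]
      refine ENNReal.toReal_le_of_le_ofReal zero_le_one ?_
      rw [ENNReal.ofReal_one]
      exact prob_le_one
  have hind_eq : ∀ i ω, A.indicator (fun _ => (1:ℝ)) (ξ i ω)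
      = (ξ i ⁻¹' A).indicator (fun _ => (1:ℝ)) ω := by
    intro i ω
    by_cases h : ξ i ω ∈ A <;> simp [h]
  have hYint : ∀ i, Integrable (fun ω => A.indicator (fun _ => (1:ℝ)) (ξ i ω)) P := by
    intro i
    have : (fun ω => A.indicator (fun _ => (1:ℝ)) (ξ i ω))
        = (ξ i ⁻¹' A).indicator (fun _ => (1:ℝ)) := funext fun ω => hind_eq i ω
    rw [this]
    exact (integrable_const (1:ℝ)).indicator (hmeas i hA)
  have hEY : ∀ i, ∫ ω, A.indicator (fun _ => (1:ℝ)) (ξ i ω) ∂P = p := by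
    intro i
    have : (fun ω => A.indicator (fun _ => (1:ℝ)) (ξ i ω))
        = (ξ i ⁻¹' A).indicator (fun _ => (1:ℝ)) := funext fun ω => hind_eq i ω
    rw [this, integral_indicator_const (1:ℝ) (hmeas i hA), measureReal_def, hmapA i, smul_eq_mul, mul_one, hp]
  have hZint : ∀ i, Integrable (Z i) P := fun i => (hYint i).sub (integrable_const p)
  have hEZ : ∀ i, ∫ ω, Z i ω ∂P = 0 := by
    intro i
    rw [hZ]
    simp only [hφ]
    rw [integral_sub (hYint i) (integrable_const p), hEY i, integral_const, measureReal_def, measure_univ,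
      ENNReal.toReal_one, one_smul, sub_self]
  have hZbdd : ∀ i ω, |Z i ω| ≤ 1 := by
    intro i ω
    rw [hZ]
    simp only [hφ]
    by_cases h : ξ i ω ∈ A
    · rw [Set.indicator_of_mem h]
      rw [abs_le]; constructor <;> [linarith [hp01.2]; linarith [hp01.1]]
    · rw [Set.indicator_of_notMem h]
      rw [abs_le]; constructor <;> [linarith [hp01.2]; linarith [hp01.1]]
  have hZZint : ∀ i j, Integrable (fun ω => Z i ω * Z j ω) P := by
    intro i j
    exact (hZint j).bdd_mul (hZmeas i).aestronglyMeasurable (c := 1)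
      (Filter.Eventually.of_forall fun ω => by rw [Real.norm_eq_abs]; exact hZbdd i ω)
  have hcross : ∀ i j : ℕ, i ≠ j → ∫ ω, Z i ω * Z j ω ∂P = 0 := by
    intro i j hij
    have hIF : IndepFun (Z i) (Z j) P :=
      (hindep.indepFun hij).comp hφmeas hφmeas
    have := hIF.integral_mul_eq_mul_integral (hZint i).1 (hZint j).1
    calc ∫ ω, Z i ω * Z j ω ∂P = ∫ ω, (Z i * Z j) ω ∂P := rfl
    _ = (∫ ω, Z i ω ∂P) * ∫ ω, Z j ω ∂P := this
    _ = 0 := by rw [hEZ i, hEZ j, mul_zero]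
  have hdiag : ∀ i : ℕ, ∫ ω, Z i ω * Z i ω ∂P ≤ 1 := by
    intro i
    have h1 : ∀ ω, Z i ω * Z i ω ≤ 1 := by
      intro ω
      have := hZbdd i ω
      nlinarith [abs_mul_abs_self (Z i ω), abs_nonneg (Z i ω)]
    calc ∫ ω, Z i ω * Z i ω ∂P ≤ ∫ _ω, (1:ℝ) ∂P :=
          integral_mono (hZZint i i) (integrable_const 1) h1
    _ = 1 := by rw [integral_const, measureReal_def, measure_univ, ENNReal.toReal_one, one_smul]
  -- the sum
  set W : Ω → ℝ := fun ω => ∑ i : Fin N, Z i ω with hW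
  have hWmeas : Measurable W := by
    rw [hW]; exact Finset.measurable_sum _ fun i _ => hZmeas i
  have hWsq : ∀ ω, W ω * W ω = ∑ i : Fin N, ∑ j : Fin N, Z i ω * Z j ω := by
    intro ω; rw [hW, Finset.sum_mul_sum]
  have hWsqint : Integrable (fun ω => W ω * W ω) P := by
    have : (fun ω => W ω * W ω) = fun ω => ∑ i : Fin N, ∑ j : Fin N, Z i ω * Z j ω :=
      funext hWsq
    rw [this]
    exact integrable_finset_sum _ fun i _ => integrable_finset_sum _ fun j _ => hZZint i j
  have hEW2 : ∫ ω, W ω * W ω ∂P ≤ N := by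
    have e1 : ∫ ω, W ω * W ω ∂P = ∑ i : Fin N, ∑ j : Fin N, ∫ ω, Z (i:ℕ) ω * Z (j:ℕ) ω ∂P := by
      calc ∫ ω, W ω * W ω ∂P
          = ∫ ω, ∑ i : Fin N, (∑ j : Fin N, Z (i:ℕ) ω * Z (j:ℕ) ω) ∂P := by
            rw [funext hWsq]
      _ = ∑ i : Fin N, ∫ ω, (∑ j : Fin N, Z (i:ℕ) ω * Z (j:ℕ) ω) ∂P :=
            integral_finset_sum _ fun i _ => integrable_finset_sum _ fun j _ => hZZint _ _
      _ = ∑ i : Fin N, ∑ j : Fin N, ∫ ω, Z (i:ℕ) ω * Z (j:ℕ) ω ∂P :=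
            Finset.sum_congr rfl fun i _ => integral_finset_sum _ fun j _ => hZZint _ _
    have e2 : ∀ i : Fin N, ∑ j : Fin N, ∫ ω, Z (i:ℕ) ω * Z (j:ℕ) ω ∂P
        = ∫ ω, Z (i:ℕ) ω * Z (i:ℕ) ω ∂P := by
      intro i
      refine Finset.sum_eq_single_of_mem i (Finset.mem_univ i) fun j _ hj => ?_
      exact hcross _ _ fun hh => hj (Fin.val_injective hh.symm)
    rw [e1, Finset.sum_congr rfl fun i _ => e2 i]
    calc ∑ _i : Fin N, ∫ ω, Z (_i:ℕ) ω * Z (_i:ℕ) ω ∂P ≤ ∑ _i : Fin N, (1:ℝ) :=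
          Finset.sum_le_sum fun i _ => hdiag (i:ℕ)
    _ = N := by rw [Finset.sum_const, Finset.card_univ, Fintype.card_fin, nsmul_eq_mul, mul_one]
  have hNne : ((N:ℝ)) ≠ 0 := ne_of_gt hNpos
  have key : ∀ ω, |(N : ℝ)⁻¹ * (∑ i : Fin N, A.indicator (fun _ => (1:ℝ)) (ξ (i : ℕ) ω)) - p|
      = (N:ℝ)⁻¹ * |W ω| := by
    intro ω
    have hWval : W ω = (∑ i : Fin N, A.indicator (fun _ => (1:ℝ)) (ξ (i : ℕ) ω)) - N * p := by
      rw [hW]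
      simp only [hZ, hφ]
      rw [Finset.sum_sub_distrib, Finset.sum_const, Finset.card_univ, Fintype.card_fin,
        nsmul_eq_mul]
    have : (N : ℝ)⁻¹ * (∑ i : Fin N, A.indicator (fun _ => (1:ℝ)) (ξ (i : ℕ) ω)) - p
        = (N:ℝ)⁻¹ * W ω := by
      rw [hWval]; field_simp
    rw [this, abs_mul, abs_of_nonneg (by positivity : (0:ℝ) ≤ (N:ℝ)⁻¹)]
  set c : ℝ := (N:ℝ)⁻¹ * (N:ℝ)⁻¹ / t with hc
  have hc0 : 0 ≤ c := by positivity
  have hbound : ∀ ω, (N:ℝ)⁻¹ * |W ω| ≤ t + c * (W ω * W ω) := by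
    intro ω
    set a : ℝ := (N:ℝ)⁻¹ * |W ω| with ha
    have ha0 : 0 ≤ a := by positivity
    have h3 : a - t ≤ a ^ 2 / t := by
      rw [le_div_iff₀ ht]
      nlinarith [sq_nonneg (a - t)]
    have h4 : a ^ 2 / t = c * (W ω * W ω) := by
      rw [ha, hc, mul_pow, sq_abs]
      ring
    linarith [h3, h4.symm.le, h4.le]
  have hWWnonneg : ∀ ω, 0 ≤ c * (W ω * W ω) := fun ω => mul_nonneg hc0 (mul_self_nonneg _)
  have hcWWint : Integrable (fun ω => c * (W ω * W ω)) P := hWsqint.const_mul c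
  calc ∫⁻ ω, ENNReal.ofReal
        |(N : ℝ)⁻¹ * (∑ i : Fin N, A.indicator (fun _ => (1:ℝ)) (ξ (i : ℕ) ω)) - p| ∂P
      = ∫⁻ ω, ENNReal.ofReal ((N:ℝ)⁻¹ * |W ω|) ∂P := by
        refine lintegral_congr fun ω => ?_
        rw [key ω]
  _ ≤ ∫⁻ ω, (ENNReal.ofReal t + ENNReal.ofReal (c * (W ω * W ω))) ∂P := by
        refine lintegral_mono fun ω => ?_
        rw [← ENNReal.ofReal_add ht.le (hWWnonneg ω)]
        exact ENNReal.ofReal_le_ofReal (hbound ω)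
  _ = ENNReal.ofReal t + ∫⁻ ω, ENNReal.ofReal (c * (W ω * W ω)) ∂P := by
        rw [lintegral_add_left measurable_const, lintegral_const, measure_univ, mul_one]
  _ ≤ ENNReal.ofReal t + ENNReal.ofReal (c * N) := by
        refine add_le_add_right ?_ _
        rw [← ofReal_integral_eq_lintegral_ofReal hcWWint
          (Filter.Eventually.of_forall hWWnonneg)]
        refine ENNReal.ofReal_le_ofReal ?_
        rw [MeasureTheory.integral_const_mul]
        exact mul_le_mul_of_nonneg_left hEW2 hc0
  _ = ENNReal.ofReal (t + 1 / (t * N)) := by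
        rw [← ENNReal.ofReal_add ht.le (by positivity)]
        congr 1
        rw [hc]
        field_simp

end Discrepancy

section MainHelpers

lemma tsub_add_tsub_le_abs {a b : ℝ} (ha : 0 ≤ a) (hb : 0 ≤ b) :
    (ENNReal.ofReal a - ENNReal.ofReal b) + (ENNReal.ofReal b - ENNReal.ofReal a)
      ≤ ENNReal.ofReal |a - b| := by
  rw [← ENNReal.ofReal_sub a hb, ← ENNReal.ofReal_sub b ha]
  rcases le_total a b with h | h
  · rw [ENNReal.ofReal_of_nonpos (by linarith), zero_add, abs_sub_comm,
      abs_of_nonneg (by linarith)]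
  · rw [ENNReal.ofReal_of_nonpos (show b - a ≤ 0 by linarith), add_zero,
      abs_of_nonneg (by linarith)]

lemma empMeasure_setLIntegral {E : Type*} [MeasurableSpace E] (N : ℕ) (v : Fin N → E)
    {T : Set E} (hT : MeasurableSet T) {g : E → ℝ≥0∞} (hg : Measurable g) :
    ∫⁻ x in T, g x ∂(empMeasure N v) = (N : ℝ≥0∞)⁻¹ * ∑ i, T.indicator g (v i) := by
  rw [← lintegral_indicator hT, empMeasure, lintegral_smul_measure,
    lintegral_finset_sum_measure]
  congr 1
  exact Finset.sum_congr rfl fun i _ => lintegral_dirac' (v i) (hg.indicator hT)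

end MainHelpers

/-- Uniform convergence, in expected squared Wasserstein distance, of the empirical
measures of i.i.d. samples whose squared norms form a bounded, uniformly integrable
family. -/
theorem uniform_empirical_wasserstein_convergence
    {d : ℕ} (hd : 1 ≤ d)
    {Ω : Type*} [MeasurableSpace Ω] (P : Measure Ω) [IsProbabilityMeasure P]
    {I : Type*} [Nonempty I]
    (ξ : I → ℕ → Ω → EuclideanSpace ℝ (Fin d))
    (hmeas : ∀ a i, Measurable (ξ a i))
    (hindep : ∀ a : I, iIndepFun (ξ a) P)
    (hident : ∀ a : I, ∀ i j : ℕ, IdentDistrib (ξ a i) (ξ a j) P P)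
    (hbdd : ∃ C : ℝ≥0∞, C < ⊤ ∧ ∀ a : I, ∫⁻ ω, ENNReal.ofReal (‖ξ a 0 ω‖ ^ 2) ∂P ≤ C)
    (hui : ∀ ε > (0 : ℝ), ∃ R > (0 : ℝ), ∀ a : I,
      ∫⁻ ω in {ω | R ≤ ‖ξ a 0 ω‖ ^ 2}, ENNReal.ofReal (‖ξ a 0 ω‖ ^ 2) ∂P
        ≤ ENNReal.ofReal ε) :
    ∀ ε > (0 : ℝ), ∃ N₀ : ℕ, ∀ N ≥ N₀, ∀ a : I,
      ∫⁻ ω, W2sq (empMeasure N (fun i : Fin N => ξ a i ω)) (P.map (ξ a 0)) ∂P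
        ≤ ENNReal.ofReal ε := by
  intro ε hε
  obtain ⟨R, hR, hRbound⟩ := hui (ε / 16) (by linarith)
  set δ : ℝ := Real.sqrt (ε / 4) with hδdef
  have hδpos : 0 < δ := Real.sqrt_pos.mpr (by linarith)
  have hδsq : δ ^ 2 = ε / 4 := Real.sq_sqrt (by linarith)
  obtain ⟨ι, hfin, A, hAmeas, hdisj, hcover, hdiam⟩ := exists_partition d hR hδpos
  haveI := hfin
  set m : ℕ := Fintype.card ι with hm
  set t : ℝ := ε / (16 * (R + 1) * (m + 1)) with htdef
  have htpos : 0 < t := by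
    apply div_pos hε
    positivity
  refine ⟨⌈1 / t ^ 2⌉₊ + 1, fun N hNN a => ?_⟩
  have hNpos : 0 < N := lt_of_lt_of_le (Nat.succ_pos _) hNN
  have hNne : N ≠ 0 := Nat.pos_iff_ne_zero.mp hNpos
  haveI : NeZero N := ⟨hNne⟩
  have hNRpos : (0:ℝ) < N := by positivity
  have hNt : 1 / (t * N) ≤ t := by
    have h1 : (1:ℝ) / t ^ 2 ≤ N := by
      calc (1:ℝ) / t ^ 2 ≤ ⌈1 / t ^ 2⌉₊ := Nat.le_ceil _
      _ ≤ N := by exact_mod_cast Nat.le_of_succ_le hNN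
    rw [div_le_iff₀ (by positivity)]
    have h2 : t ^ 2 * (1 / t ^ 2) ≤ t ^ 2 * N :=
      mul_le_mul_of_nonneg_left h1 (by positivity)
    have h3 : t ^ 2 * (1 / t ^ 2) = 1 := by field_simp
    nlinarith [h2, h3]
  set μa : Measure (EuclideanSpace ℝ (Fin d)) := P.map (ξ a 0) with hμa
  haveI : IsProbabilityMeasure μa := Measure.isProbabilityMeasure_map (hmeas a 0).aemeasurable
  set T : Set (EuclideanSpace ℝ (Fin d)) := {x | R ≤ ‖x‖ ^ 2} with hTdef
  have hTmeas : MeasurableSet T :=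
    measurableSet_le measurable_const (measurable_norm.pow_const 2)
  set g : EuclideanSpace ℝ (Fin d) → ℝ≥0∞ := fun x => ENNReal.ofReal (‖x‖ ^ 2) with hgdef
  have hgmeas : Measurable g := ENNReal.measurable_ofReal.comp (measurable_norm.pow_const 2)
  have htailC : ∫⁻ x in T, g x ∂μa ≤ ENNReal.ofReal (ε / 16) := by
    rw [hμa, setLIntegral_map hTmeas hgmeas (hmeas a 0)]
    exact hRbound a
  have htail_map : ∀ i : ℕ, ∫⁻ ω, T.indicator g (ξ a i ω) ∂P ≤ ENNReal.ofReal (ε / 16) := by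
    intro i
    have e1 : ∫⁻ ω, T.indicator g (ξ a i ω) ∂P
        = ∫⁻ x, T.indicator g x ∂(P.map (ξ a i)) :=
      (lintegral_map (hgmeas.indicator hTmeas) (hmeas a i)).symm
    rw [e1, (hident a i 0).map_eq, lintegral_indicator hTmeas, ← hμa]
    exact htailC
  -- per-cell discrepancy bound
  have hcell : ∀ j : ι, ∫⁻ ω, ENNReal.ofReal
      |(N : ℝ)⁻¹ * (∑ i : Fin N, (A j).indicator (fun _ => (1:ℝ)) (ξ a (i : ℕ) ω))
        - (μa (A j)).toReal| ∂P ≤ ENNReal.ofReal (2 * t) := by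
    intro j
    refine le_trans (expectation_discrepancy P (ξ a) (hmeas a) (hindep a) (hident a)
      (hAmeas j) hNne htpos) ?_
    exact ENNReal.ofReal_le_ofReal (by linarith [hNt])
  -- pointwise Wasserstein bound
  have hpoint : ∀ ω, W2sq (empMeasure N (fun i : Fin N => ξ a (i : ℕ) ω)) μa
      ≤ ENNReal.ofReal (δ ^ 2)
        + 2 * ENNReal.ofReal R * (∑ j, ENNReal.ofReal
            |(N : ℝ)⁻¹ * (∑ i : Fin N, (A j).indicator (fun _ => (1:ℝ)) (ξ a (i : ℕ) ω))
              - (μa (A j)).toReal|)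
        + 2 * ((N : ℝ≥0∞)⁻¹ * ∑ i : Fin N, T.indicator g (ξ a (i : ℕ) ω))
        + 2 * ∫⁻ x in T, g x ∂μa := by
    intro ω
    have hA1 := W2sq_le_of_partition (empMeasure N (fun i : Fin N => ξ a (i : ℕ) ω)) μa
      A R δ hAmeas hdisj hcover hdiam
    refine le_trans hA1 (add_le_add (add_le_add (add_le_add le_rfl ?_) ?_) ?_)
    · refine mul_le_mul_right (Finset.sum_le_sum fun j _ => ?_) _
      rw [empMeasure_apply hNne _ (hAmeas j),
        show μa (A j) = ENNReal.ofReal ((μa (A j)).toReal) from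
          (ENNReal.ofReal_toReal (measure_ne_top _ _)).symm]
      refine le_trans (tsub_add_tsub_le_abs ?_ ENNReal.toReal_nonneg) ?_
      · refine mul_nonneg (by positivity) (Finset.sum_nonneg fun i _ =>
          Set.indicator_nonneg (fun _ _ => zero_le_one) _)
      · rw [ENNReal.ofReal_toReal (measure_ne_top _ _),
          ← ENNReal.ofReal_toReal (measure_ne_top μa (A j))]
    · refine mul_le_mul_right ?_ _
      rw [empMeasure_setLIntegral N _ hTmeas hgmeas]
    · exact le_rfl
  -- integrate
  have hSmeas : ∀ j : ι, Measurable fun ω => ENNReal.ofReal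
      |(N : ℝ)⁻¹ * (∑ i : Fin N, (A j).indicator (fun _ => (1:ℝ)) (ξ a (i : ℕ) ω))
        - (μa (A j)).toReal| := by
    intro j
    refine ENNReal.measurable_ofReal.comp ?_
    refine ((Measurable.const_mul ?_ _).sub measurable_const).abs
    refine Finset.measurable_sum _ fun i _ => ?_
    exact (measurable_const.indicator (hAmeas j)).comp (hmeas a (i : ℕ))
  have hTmeas' : ∀ i : Fin N, Measurable fun ω => T.indicator g (ξ a (i : ℕ) ω) :=
    fun i => (hgmeas.indicator hTmeas).comp (hmeas a (i : ℕ))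
  have h2R_ne_top : (2 : ℝ≥0∞) * ENNReal.ofReal R ≠ ⊤ :=
    ENNReal.mul_ne_top (by norm_num) ENNReal.ofReal_ne_top
  have hNinv_ne_top : ((N : ℝ≥0∞))⁻¹ ≠ ⊤ :=
    ENNReal.inv_ne_top.mpr (Nat.cast_ne_zero.mpr hNne)
  calc ∫⁻ ω, W2sq (empMeasure N (fun i : Fin N => ξ a (i : ℕ) ω)) μa ∂P
      ≤ ∫⁻ ω, (ENNReal.ofReal (δ ^ 2)
        + 2 * ENNReal.ofReal R * (∑ j, ENNReal.ofReal
            |(N : ℝ)⁻¹ * (∑ i : Fin N, (A j).indicator (fun _ => (1:ℝ)) (ξ a (i : ℕ) ω))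
              - (μa (A j)).toReal|)
        + 2 * ((N : ℝ≥0∞)⁻¹ * ∑ i : Fin N, T.indicator g (ξ a (i : ℕ) ω))
        + 2 * ∫⁻ x in T, g x ∂μa) ∂P := lintegral_mono hpoint
  _ = ENNReal.ofReal (δ ^ 2)
      + 2 * ENNReal.ofReal R * (∑ j, ∫⁻ ω, ENNReal.ofReal
          |(N : ℝ)⁻¹ * (∑ i : Fin N, (A j).indicator (fun _ => (1:ℝ)) (ξ a (i : ℕ) ω))
            - (μa (A j)).toReal| ∂P)
      + 2 * ((N : ℝ≥0∞)⁻¹ * ∑ i : Fin N, ∫⁻ ω, T.indicator g (ξ a (i : ℕ) ω) ∂P)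
      + 2 * ∫⁻ x in T, g x ∂μa := by
      have measF3 : Measurable fun ω =>
          2 * ((N : ℝ≥0∞)⁻¹ * ∑ i : Fin N, T.indicator g (ξ a (i : ℕ) ω)) :=
        ((Finset.measurable_sum _ fun i _ => hTmeas' i).const_mul
          ((N : ℝ≥0∞))⁻¹).const_mul 2
      rw [lintegral_add_right _ measurable_const,
        lintegral_add_right _ measF3,
        lintegral_add_left measurable_const,
        lintegral_const, measure_univ, mul_one,
        lintegral_const, measure_univ, mul_one,
        lintegral_const_mul' _ _ h2R_ne_top,
        lintegral_finset_sum _ fun j _ => hSmeas j,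
        lintegral_const_mul' 2 _ (by norm_num),
        lintegral_const_mul' _ _ hNinv_ne_top,
        lintegral_finset_sum _ fun i _ => hTmeas' i]
  _ ≤ ENNReal.ofReal (ε / 4) + ENNReal.ofReal (ε / 4)
      + ENNReal.ofReal (ε / 8) + ENNReal.ofReal (ε / 8) := by
      have htwo : (2 : ℝ≥0∞) = ENNReal.ofReal 2 := (ENNReal.ofReal_ofNat 2).symm
      have hB1 : ENNReal.ofReal (δ ^ 2) ≤ ENNReal.ofReal (ε / 4) := by
        rw [hδsq]
      have hB2 : 2 * ENNReal.ofReal R * (∑ j, ∫⁻ ω, ENNReal.ofReal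
          |(N : ℝ)⁻¹ * (∑ i : Fin N, (A j).indicator (fun _ => (1:ℝ)) (ξ a (i : ℕ) ω))
            - (μa (A j)).toReal| ∂P) ≤ ENNReal.ofReal (ε / 4) := by
        have hsum : (∑ j, ∫⁻ ω, ENNReal.ofReal
            |(N : ℝ)⁻¹ * (∑ i : Fin N, (A j).indicator (fun _ => (1:ℝ)) (ξ a (i : ℕ) ω))
              - (μa (A j)).toReal| ∂P) ≤ (m : ℝ≥0∞) * ENNReal.ofReal (2 * t) := by
          calc (∑ j, ∫⁻ ω, ENNReal.ofReal
              |(N : ℝ)⁻¹ * (∑ i : Fin N, (A j).indicator (fun _ => (1:ℝ)) (ξ a (i : ℕ) ω))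
                - (μa (A j)).toReal| ∂P)
              ≤ ∑ _j : ι, ENNReal.ofReal (2 * t) :=
                Finset.sum_le_sum fun j _ => hcell j
          _ = (m : ℝ≥0∞) * ENNReal.ofReal (2 * t) := by
                rw [Finset.sum_const, Finset.card_univ, ← hm, nsmul_eq_mul]
        refine le_trans (mul_le_mul_right hsum _) ?_
        have heq : 2 * ENNReal.ofReal R * ((m : ℝ≥0∞) * ENNReal.ofReal (2 * t))
            = ENNReal.ofReal (2 * R * ((m : ℝ) * (2 * t))) := by
          rw [htwo, ← ENNReal.ofReal_natCast m, ← ENNReal.ofReal_mul (by norm_num),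
            ← ENNReal.ofReal_mul (by positivity), ← ENNReal.ofReal_mul (by positivity)]
        rw [heq]
        refine ENNReal.ofReal_le_ofReal ?_
        have h4 : 2 * R * ((m : ℝ) * (2 * t)) = (4 * R * m * ε) / (16 * (R + 1) * (m + 1)) := by
          rw [htdef]; ring
        rw [h4, div_le_div_iff₀ (by positivity) (by norm_num)]
        nlinarith [hR.le, hε.le, Nat.cast_nonneg (α := ℝ) m, mul_nonneg hR.le hε.le,
          mul_nonneg (mul_nonneg hR.le (Nat.cast_nonneg (α := ℝ) m)) hε.le,
          mul_nonneg (Nat.cast_nonneg (α := ℝ) m) hε.le]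
      have hB3 : 2 * ((N : ℝ≥0∞)⁻¹ * ∑ i : Fin N, ∫⁻ ω, T.indicator g (ξ a (i : ℕ) ω) ∂P)
          ≤ ENNReal.ofReal (ε / 8) := by
        have hsum : (∑ i : Fin N, ∫⁻ ω, T.indicator g (ξ a (i : ℕ) ω) ∂P)
            ≤ (N : ℝ≥0∞) * ENNReal.ofReal (ε / 16) := by
          calc (∑ i : Fin N, ∫⁻ ω, T.indicator g (ξ a (i : ℕ) ω) ∂P)
              ≤ ∑ _i : Fin N, ENNReal.ofReal (ε / 16) :=
                Finset.sum_le_sum fun i _ => htail_map (i : ℕ)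
          _ = (N : ℝ≥0∞) * ENNReal.ofReal (ε / 16) := by
                rw [Finset.sum_const, Finset.card_univ, Fintype.card_fin, nsmul_eq_mul]
        calc 2 * ((N : ℝ≥0∞)⁻¹ * ∑ i : Fin N, ∫⁻ ω, T.indicator g (ξ a (i : ℕ) ω) ∂P)
            ≤ 2 * ((N : ℝ≥0∞)⁻¹ * ((N : ℝ≥0∞) * ENNReal.ofReal (ε / 16))) :=
              mul_le_mul_right (mul_le_mul_right hsum _) _
        _ = 2 * ENNReal.ofReal (ε / 16) := by
              rw [← mul_assoc ((N : ℝ≥0∞))⁻¹,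
                ENNReal.inv_mul_cancel (Nat.cast_ne_zero.mpr hNne) (ENNReal.natCast_ne_top N),
                one_mul]
        _ = ENNReal.ofReal (ε / 8) := by
              rw [htwo, ← ENNReal.ofReal_mul (by norm_num)]
              congr 1
              ring
      have hB4 : 2 * ∫⁻ x in T, g x ∂μa ≤ ENNReal.ofReal (ε / 8) := by
        calc 2 * ∫⁻ x in T, g x ∂μa ≤ 2 * ENNReal.ofReal (ε / 16) :=
              mul_le_mul_right htailC _
        _ = ENNReal.ofReal (ε / 8) := by
              rw [htwo, ← ENNReal.ofReal_mul (by norm_num)]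
              congr 1
              ring
      exact add_le_add (add_le_add (add_le_add hB1 hB2) hB3) hB4
  _ ≤ ENNReal.ofReal ε := by
      rw [← ENNReal.ofReal_add (by linarith) (by linarith),
        ← ENNReal.ofReal_add (by linarith) (by linarith),
        ← ENNReal.ofReal_add (by linarith) (by linarith)]
      exact ENNReal.ofReal_le_ofReal (by linarith)


end
end
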